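/- arXiv:math/0104157 — 5 statements merged into one kernel-verified Lean document; each statement's English description precedes it below -/
import Mathlib

section
/- Suppose the variational Fels structure equations hold on an open set U ⊆ ℝ⁸ for smooth 1-forms σ, θ₀, θ₁, θ₂, θ₃, α, β, γ and smooth functions I₀, T₁, T₂, T₃, T₄, T₆, T₇. Then the 2-form θ₀ ∧ θ₃ − θ₁ ∧ θ₂ satisfies d(θ₀ ∧ θ₃ − θ₁ ∧ θ₂) = (2β − 3α) ∧ (θ₀ ∧ θ₃ − θ₁ ∧ θ₂). -/
noncomputable section

/-- The exterior derivative of a smooth 1-form `η`, as a scalar-valued 2-form: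
`dη(x)(u,v) = (fderiv ℝ η x u)(v) − (fderiv ℝ η x v)(u)`. -/
def d1 {E : Type*} [NormedAddCommGroup E] [NormedSpace ℝ E]
    (η : E → (E →L[ℝ] ℝ)) (x u v : E) : ℝ :=
  fderiv ℝ η x u v - fderiv ℝ η x v u

/-- The wedge product of two 1-forms, as a scalar-valued 2-form. -/
def wedge {E : Type*} [NormedAddCommGroup E] [NormedSpace ℝ E]
    (η ζ : E → (E →L[ℝ] ℝ)) (x u v : E) : ℝ :=
  η x u * ζ x v - η x v * ζ x u

/-- The wedge product of two 1-forms, as a continuous-bilinear-map-valued 2-form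
(so that its exterior derivative can be taken via `fderiv`). -/
def wedge2 {E : Type*} [NormedAddCommGroup E] [NormedSpace ℝ E]
    (η ζ : E → (E →L[ℝ] ℝ)) (x : E) : E →L[ℝ] (E →L[ℝ] ℝ) :=
  (η x).smulRight (ζ x) - (ζ x).smulRight (η x)

/-- The exterior derivative of a smooth 2-form `ω`:
`dω(x)(u,v,w) = (fderiv ℝ ω x u)(v,w) − (fderiv ℝ ω x v)(u,w) + (fderiv ℝ ω x w)(u,v)`. -/
def d2 {E : Type*} [NormedAddCommGroup E] [NormedSpace ℝ E]
    (ω : E → (E →L[ℝ] (E →L[ℝ] ℝ))) (x u v w : E) : ℝ :=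
  fderiv ℝ ω x u v w - fderiv ℝ ω x v u w + fderiv ℝ ω x w u v

namespace FelsAux

abbrev E8 : Type := Fin 8 → ℝ

lemma app1 {F : Type*} [NormedAddCommGroup F] [NormedSpace ℝ F]
    {η : E8 → (E8 →L[ℝ] F)} {x : E8} (h : DifferentiableAt ℝ η x) (u v : E8) :
    fderiv ℝ (fun y => η y v) x u = fderiv ℝ η x u v := by
  rw [fderiv_clm_apply h (differentiableAt_const v)]
  simp

lemma app2 {ω : E8 → (E8 →L[ℝ] E8 →L[ℝ] ℝ)} {x : E8}
    (h : DifferentiableAt ℝ ω x) (u v w : E8) :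
    fderiv ℝ (fun y => ω y v w) x u = fderiv ℝ ω x u v w := by
  have h1 : DifferentiableAt ℝ (fun y => ω y v) x := h.clm_apply (differentiableAt_const v)
  have := app1 (η := fun y => ω y v) h1 u w
  rw [this, app1 h u v]

lemma diff_smulRight {η ζ : E8 → (E8 →L[ℝ] ℝ)} {x : E8}
    (hη : DifferentiableAt ℝ η x) (hζ : DifferentiableAt ℝ ζ x) :
    DifferentiableAt ℝ (fun y => (η y).smulRight (ζ y)) x := by
  have hB : IsBoundedBilinearMap ℝ (fun p : (E8 →L[ℝ] ℝ) × (E8 →L[ℝ] ℝ) => p.1.smulRight p.2) :=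
    isBoundedBilinearMap_smulRight
  have h1 : DifferentiableAt ℝ (fun p : (E8 →L[ℝ] ℝ) × (E8 →L[ℝ] ℝ) => p.1.smulRight p.2)
      (η x, ζ x) := IsBoundedBilinearMap.differentiableAt (𝕜 := ℝ) (G := E8 →L[ℝ] E8 →L[ℝ] ℝ) hB (η x, ζ x)
  exact h1.comp (G := E8 →L[ℝ] E8 →L[ℝ] ℝ) x (hη.prodMk hζ)

lemma diff_wedge2 {η ζ : E8 → (E8 →L[ℝ] ℝ)} {x : E8}
    (hη : DifferentiableAt ℝ η x) (hζ : DifferentiableAt ℝ ζ x) :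
    DifferentiableAt ℝ (wedge2 η ζ) x := by
  unfold wedge2
  exact (diff_smulRight hη hζ).fun_sub (𝕜 := ℝ) (E := E8) (F := E8 →L[ℝ] E8 →L[ℝ] ℝ) (diff_smulRight hζ hη)

lemma scalar_fderiv {η ζ : E8 → (E8 →L[ℝ] ℝ)} {x : E8}
    (hη : DifferentiableAt ℝ η x) (hζ : DifferentiableAt ℝ ζ x) (u v w : E8) :
    fderiv ℝ (fun y => η y v * ζ y w) x u
      = fderiv ℝ η x u v * ζ x w + η x v * fderiv ℝ ζ x u w := by
  rw [fderiv_fun_mul (hη.clm_apply (differentiableAt_const v))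
    (hζ.clm_apply (differentiableAt_const w))]
  simp [app1 hη, app1 hζ]
  ring

lemma pair_fderiv {η ζ : E8 → (E8 →L[ℝ] ℝ)} {x : E8}
    (hη : DifferentiableAt ℝ η x) (hζ : DifferentiableAt ℝ ζ x) (u v w : E8) :
    fderiv ℝ (fun y => η y v * ζ y w - ζ y v * η y w) x u
      = fderiv ℝ η x u v * ζ x w + η x v * fderiv ℝ ζ x u w
        - (fderiv ℝ ζ x u v * η x w + ζ x v * fderiv ℝ η x u w) := by
  rw [fderiv_fun_sub
    ((hη.clm_apply (differentiableAt_const v)).fun_mul (hζ.clm_apply (differentiableAt_const w)))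
    ((hζ.clm_apply (differentiableAt_const v)).fun_mul (hη.clm_apply (differentiableAt_const w)))]
  rw [ContinuousLinearMap.sub_apply, scalar_fderiv hη hζ, scalar_fderiv hζ hη]

lemma fderiv_omega {θ0 θ1 θ2 θ3 : E8 → (E8 →L[ℝ] ℝ)} {x : E8}
    (h0 : DifferentiableAt ℝ θ0 x) (h1 : DifferentiableAt ℝ θ1 x)
    (h2 : DifferentiableAt ℝ θ2 x) (h3 : DifferentiableAt ℝ θ3 x) (u v w : E8) :
    fderiv ℝ (fun y => wedge2 θ0 θ3 y - wedge2 θ1 θ2 y) x u v w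
      = (fderiv ℝ θ0 x u v * θ3 x w + θ0 x v * fderiv ℝ θ3 x u w
          - (fderiv ℝ θ3 x u v * θ0 x w + θ3 x v * fderiv ℝ θ0 x u w))
        - (fderiv ℝ θ1 x u v * θ2 x w + θ1 x v * fderiv ℝ θ2 x u w
          - (fderiv ℝ θ2 x u v * θ1 x w + θ2 x v * fderiv ℝ θ1 x u w)) := by
  have hω : DifferentiableAt ℝ (fun y => wedge2 θ0 θ3 y - wedge2 θ1 θ2 y) x :=
    (diff_wedge2 h0 h3).fun_sub (𝕜 := ℝ) (E := E8) (F := E8 →L[ℝ] E8 →L[ℝ] ℝ) (diff_wedge2 h1 h2)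
  rw [← app2 hω u v w]
  have hfun : (fun y => (wedge2 θ0 θ3 y - wedge2 θ1 θ2 y) v w)
      = fun y => (θ0 y v * θ3 y w - θ3 y v * θ0 y w)
          - (θ1 y v * θ2 y w - θ2 y v * θ1 y w) := by
    funext y
    simp [wedge2, smul_eq_mul]
  rw [hfun, fderiv_fun_sub
    (((h0.clm_apply (differentiableAt_const v)).fun_mul (h3.clm_apply (differentiableAt_const w))).fun_sub
      ((h3.clm_apply (differentiableAt_const v)).fun_mul (h0.clm_apply (differentiableAt_const w))))
    (((h1.clm_apply (differentiableAt_const v)).fun_mul (h2.clm_apply (differentiableAt_const w))).fun_sub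
      ((h2.clm_apply (differentiableAt_const v)).fun_mul (h1.clm_apply (differentiableAt_const w))))]
  rw [ContinuousLinearMap.sub_apply, pair_fderiv h0 h3 u v w, pair_fderiv h1 h2 u v w]

end FelsAux

set_option maxHeartbeats 1600000 in
/-- For the variational Fels structure equations, the 2-form `θ₀∧θ₃ − θ₁∧θ₂`
satisfies `d(θ₀∧θ₃ − θ₁∧θ₂) = (2β − 3α)∧(θ₀∧θ₃ − θ₁∧θ₂)`. -/
theorem two_form_structure_equation
    (U : Set (Fin 8 → ℝ)) (hU : IsOpen U)
    (σ θ0 θ1 θ2 θ3 α β γ : (Fin 8 → ℝ) → ((Fin 8 → ℝ) →L[ℝ] ℝ))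
    (I0 T1 T2 T3 T4 T6 T7 : (Fin 8 → ℝ) → ℝ)
    (hσ : ContDiffOn ℝ (⊤ : ℕ∞) σ U) (hθ0 : ContDiffOn ℝ (⊤ : ℕ∞) θ0 U)
    (hθ1 : ContDiffOn ℝ (⊤ : ℕ∞) θ1 U) (hθ2 : ContDiffOn ℝ (⊤ : ℕ∞) θ2 U)
    (hθ3 : ContDiffOn ℝ (⊤ : ℕ∞) θ3 U) (hα : ContDiffOn ℝ (⊤ : ℕ∞) α U)
    (hβ : ContDiffOn ℝ (⊤ : ℕ∞) β U) (hγ : ContDiffOn ℝ (⊤ : ℕ∞) γ U)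
    (hI0 : ContDiffOn ℝ (⊤ : ℕ∞) I0 U) (hT1 : ContDiffOn ℝ (⊤ : ℕ∞) T1 U)
    (hT2 : ContDiffOn ℝ (⊤ : ℕ∞) T2 U) (hT3 : ContDiffOn ℝ (⊤ : ℕ∞) T3 U)
    (hT4 : ContDiffOn ℝ (⊤ : ℕ∞) T4 U) (hT6 : ContDiffOn ℝ (⊤ : ℕ∞) T6 U)
    (hT7 : ContDiffOn ℝ (⊤ : ℕ∞) T7 U)
    (hdσ : ∀ x ∈ U, ∀ u v, d1 σ x u v =
      wedge α σ x u v
      + wedge θ0 (fun y => T1 y • θ1 y + T2 y • θ2 y + T3 y • θ3 y) x u v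
      + T4 x * wedge θ1 θ2 x u v)
    (hdθ0 : ∀ x ∈ U, ∀ u v, d1 θ0 x u v = wedge β θ0 x u v + wedge σ θ1 x u v)
    (hdθ1 : ∀ x ∈ U, ∀ u v, d1 θ1 x u v =
      wedge (fun y => β y - α y) θ1 x u v + wedge γ θ0 x u v + wedge σ θ2 x u v)
    (hdθ2 : ∀ x ∈ U, ∀ u v, d1 θ2 x u v =
      wedge (fun y => β y - (2 : ℝ) • α y) θ2 x u v
      + (4 / 3) * wedge γ θ1 x u v + wedge σ θ3 x u v)
    (hdθ3 : ∀ x ∈ U, ∀ u v, d1 θ3 x u v =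
      wedge (fun y => β y - (3 : ℝ) • α y) θ3 x u v + wedge γ θ2 x u v
      + I0 x * wedge σ θ0 x u v + T6 x * wedge θ0 θ1 x u v + T7 x * wedge θ0 θ2 x u v) :
    ∀ x ∈ U, ∀ u v w : Fin 8 → ℝ,
      d2 (fun y => wedge2 θ0 θ3 y - wedge2 θ1 θ2 y) x u v w =
        (2 * β x u - 3 * α x u) * (wedge2 θ0 θ3 x - wedge2 θ1 θ2 x) v w
        - (2 * β x v - 3 * α x v) * (wedge2 θ0 θ3 x - wedge2 θ1 θ2 x) u w
        + (2 * β x w - 3 * α x w) * (wedge2 θ0 θ3 x - wedge2 θ1 θ2 x) u v := by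
  intro x hx u v w
  have hxU : U ∈ nhds x := hU.mem_nhds hx
  have d0 : DifferentiableAt ℝ θ0 x := (hθ0.contDiffAt hxU).differentiableAt (by simp)
  have d1' : DifferentiableAt ℝ θ1 x := (hθ1.contDiffAt hxU).differentiableAt (by simp)
  have d2' : DifferentiableAt ℝ θ2 x := (hθ2.contDiffAt hxU).differentiableAt (by simp)
  have d3 : DifferentiableAt ℝ θ3 x := (hθ3.contDiffAt hxU).differentiableAt (by simp)
  have h0uv := hdθ0 x hx u v
  have h0uw := hdθ0 x hx u w
  have h0vw := hdθ0 x hx v w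
  have h1uv := hdθ1 x hx u v
  have h1uw := hdθ1 x hx u w
  have h1vw := hdθ1 x hx v w
  have h2uv := hdθ2 x hx u v
  have h2uw := hdθ2 x hx u w
  have h2vw := hdθ2 x hx v w
  have h3uv := hdθ3 x hx u v
  have h3uw := hdθ3 x hx u w
  have h3vw := hdθ3 x hx v w
  simp only [d1, wedge, ContinuousLinearMap.sub_apply, ContinuousLinearMap.add_apply,
    ContinuousLinearMap.smul_apply, smul_eq_mul] at h0uv h0uw h0vw h1uv h1uw h1vw h2uv h2uw h2vw h3uv h3uw h3vw
  rw [d2, FelsAux.fderiv_omega d0 d1' d2' d3 u v w, FelsAux.fderiv_omega d0 d1' d2' d3 v u w,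
    FelsAux.fderiv_omega d0 d1' d2' d3 w u v]
  simp only [wedge2, ContinuousLinearMap.sub_apply, ContinuousLinearMap.smulRight_apply,
    ContinuousLinearMap.smul_apply, smul_eq_mul]
  linear_combination ((θ3 x w) * h0uv - (θ3 x v) * h0uw + (θ3 x u) * h0vw
    - (θ0 x u) * h3vw + (θ0 x v) * h3uw - (θ0 x w) * h3uv
    - (θ2 x w) * h1uv + (θ2 x v) * h1uw - (θ2 x u) * h1vw
    + (θ1 x u) * h2vw - (θ1 x v) * h2uw + (θ1 x w) * h2uv)
end
end

section
/- Suppose the variational Fels structure equations hold on an open set U ⊆ ℝ⁸ for smooth 1-forms σ, θ₀, θ₁, θ₂, θ₃, α, β, γ and smooth functions I₀, T₁, T₂, T₃, T₄, T₆, T₇, and let m : U → ℝ be a smooth nowhere-vanishing function whose differential satisfies dm = m·(3α − 2β). Then the 2-form ω = m·(θ₀ ∧ θ₃ − θ₁ ∧ θ₂) is closed: dω = 0. -/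
noncomputable section

section helpers

variable {E F : Type*} [NormedAddCommGroup E] [NormedSpace ℝ E]
  [NormedAddCommGroup F] [NormedSpace ℝ F]

lemma PC.hasFDerivAt_apply {f : E → (E →L[ℝ] F)} {x : E} (hf : DifferentiableAt ℝ f x) (b : E) :
    HasFDerivAt (fun y => f y b) ((fderiv ℝ f x).flip b) x := by
  have h := hf.hasFDerivAt.clm_apply (hasFDerivAt_const b x)
  simpa using h

lemma PC.fderiv_apply2 {f : E → (E →L[ℝ] (E →L[ℝ] ℝ))} {x : E} (hf : DifferentiableAt ℝ f x)
    (a b c : E) : fderiv ℝ f x a b c = fderiv ℝ (fun y => f y b c) x a := by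
  have h1 := PC.hasFDerivAt_apply hf b
  have h2 := PC.hasFDerivAt_apply h1.differentiableAt c
  rw [h2.fderiv, h1.fderiv]
  simp [ContinuousLinearMap.flip_apply]

lemma PC.diff_wedge2 {η ζ : E → (E →L[ℝ] ℝ)} {x : E}
    (hη : ContDiffAt ℝ (⊤ : ℕ∞) η x) (hζ : ContDiffAt ℝ (⊤ : ℕ∞) ζ x) :
    DifferentiableAt ℝ (wedge2 η ζ) x := by
  unfold wedge2
  exact ((hη.smulRight hζ).sub (hζ.smulRight hη)).differentiableAt (by simp)

end helpers
set_option maxHeartbeats 2000000 in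
/-- For the variational Fels structure equations, if `m` is a nowhere-vanishing
smooth function with `dm = m·(3α − 2β)`, then the 2-form `ω = m·(θ₀∧θ₃ − θ₁∧θ₂)` is
closed. -/
theorem poincare_cartan_two_form_closed
    (U : Set (Fin 8 → ℝ)) (hU : IsOpen U)
    (σ θ0 θ1 θ2 θ3 α β γ : (Fin 8 → ℝ) → ((Fin 8 → ℝ) →L[ℝ] ℝ))
    (I0 T1 T2 T3 T4 T6 T7 : (Fin 8 → ℝ) → ℝ)
    (hσ : ContDiffOn ℝ (⊤ : ℕ∞) σ U) (hθ0 : ContDiffOn ℝ (⊤ : ℕ∞) θ0 U)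
    (hθ1 : ContDiffOn ℝ (⊤ : ℕ∞) θ1 U) (hθ2 : ContDiffOn ℝ (⊤ : ℕ∞) θ2 U)
    (hθ3 : ContDiffOn ℝ (⊤ : ℕ∞) θ3 U) (hα : ContDiffOn ℝ (⊤ : ℕ∞) α U)
    (hβ : ContDiffOn ℝ (⊤ : ℕ∞) β U) (hγ : ContDiffOn ℝ (⊤ : ℕ∞) γ U)
    (hI0 : ContDiffOn ℝ (⊤ : ℕ∞) I0 U) (hT1 : ContDiffOn ℝ (⊤ : ℕ∞) T1 U)
    (hT2 : ContDiffOn ℝ (⊤ : ℕ∞) T2 U) (hT3 : ContDiffOn ℝ (⊤ : ℕ∞) T3 U)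
    (hT4 : ContDiffOn ℝ (⊤ : ℕ∞) T4 U) (hT6 : ContDiffOn ℝ (⊤ : ℕ∞) T6 U)
    (hT7 : ContDiffOn ℝ (⊤ : ℕ∞) T7 U)
    (hdσ : ∀ x ∈ U, ∀ u v, d1 σ x u v =
      wedge α σ x u v
      + wedge θ0 (fun y => T1 y • θ1 y + T2 y • θ2 y + T3 y • θ3 y) x u v
      + T4 x * wedge θ1 θ2 x u v)
    (hdθ0 : ∀ x ∈ U, ∀ u v, d1 θ0 x u v = wedge β θ0 x u v + wedge σ θ1 x u v)
    (hdθ1 : ∀ x ∈ U, ∀ u v, d1 θ1 x u v =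
      wedge (fun y => β y - α y) θ1 x u v + wedge γ θ0 x u v + wedge σ θ2 x u v)
    (hdθ2 : ∀ x ∈ U, ∀ u v, d1 θ2 x u v =
      wedge (fun y => β y - (2 : ℝ) • α y) θ2 x u v
      + (4 / 3) * wedge γ θ1 x u v + wedge σ θ3 x u v)
    (hdθ3 : ∀ x ∈ U, ∀ u v, d1 θ3 x u v =
      wedge (fun y => β y - (3 : ℝ) • α y) θ3 x u v + wedge γ θ2 x u v
      + I0 x * wedge σ θ0 x u v + T6 x * wedge θ0 θ1 x u v + T7 x * wedge θ0 θ2 x u v)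
    (m : (Fin 8 → ℝ) → ℝ) (hm : ContDiffOn ℝ (⊤ : ℕ∞) m U)
    (hm0 : ∀ x ∈ U, m x ≠ 0)
    (hdm : ∀ x ∈ U, fderiv ℝ m x = m x • ((3 : ℝ) • α x - (2 : ℝ) • β x)) :
    ∀ x ∈ U, ∀ u v w : Fin 8 → ℝ,
      d2 (fun y => m y • (wedge2 θ0 θ3 y - wedge2 θ1 θ2 y)) x u v w = 0 := by
  intro x hx u v w
  have hxU : U ∈ nhds x := hU.mem_nhds hx
  have C0 : ContDiffAt ℝ (⊤ : ℕ∞) θ0 x := hθ0.contDiffAt hxU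
  have C1 : ContDiffAt ℝ (⊤ : ℕ∞) θ1 x := hθ1.contDiffAt hxU
  have C2 : ContDiffAt ℝ (⊤ : ℕ∞) θ2 x := hθ2.contDiffAt hxU
  have C3 : ContDiffAt ℝ (⊤ : ℕ∞) θ3 x := hθ3.contDiffAt hxU
  have Cm : ContDiffAt ℝ (⊤ : ℕ∞) m x := hm.contDiffAt hxU
  have D0 : DifferentiableAt ℝ θ0 x := C0.differentiableAt (by simp)
  have D1 : DifferentiableAt ℝ θ1 x := C1.differentiableAt (by simp)
  have D2' : DifferentiableAt ℝ θ2 x := C2.differentiableAt (by simp)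
  have D3 : DifferentiableAt ℝ θ3 x := C3.differentiableAt (by simp)
  have Dm : DifferentiableAt ℝ m x := Cm.differentiableAt (by simp)
  have hω : DifferentiableAt ℝ (fun y => m y • (wedge2 θ0 θ3 y - wedge2 θ1 θ2 y)) x :=
    by
      haveI : IsBoundedSMul ℝ ((Fin 8 → ℝ) →L[ℝ] (Fin 8 → ℝ) →L[ℝ] ℝ) :=
        NormedSpace.toIsBoundedSMul (𝕜 := ℝ) (E := (Fin 8 → ℝ) →L[ℝ] (Fin 8 → ℝ) →L[ℝ] ℝ)
      exact Dm.fun_smul ((PC.diff_wedge2 C0 C3).fun_sub (F := (Fin 8 → ℝ) →L[ℝ] (Fin 8 → ℝ) →L[ℝ] ℝ) (PC.diff_wedge2 C1 C2))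
  have key : ∀ a b c : Fin 8 → ℝ,
      fderiv ℝ (fun y => m y • (wedge2 θ0 θ3 y - wedge2 θ1 θ2 y)) x a b c
      = fderiv ℝ m x a *
          (θ0 x b * θ3 x c - θ3 x b * θ0 x c - (θ1 x b * θ2 x c - θ2 x b * θ1 x c))
        + m x * (fderiv ℝ θ0 x a b * θ3 x c + θ0 x b * fderiv ℝ θ3 x a c
            - (fderiv ℝ θ3 x a b * θ0 x c + θ3 x b * fderiv ℝ θ0 x a c)
            - (fderiv ℝ θ1 x a b * θ2 x c + θ1 x b * fderiv ℝ θ2 x a c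
               - (fderiv ℝ θ2 x a b * θ1 x c + θ2 x b * fderiv ℝ θ1 x a c))) := by
    intro a b c
    rw [PC.fderiv_apply2 hω a b c]
    have hfun : (fun y => (m y • (wedge2 θ0 θ3 y - wedge2 θ1 θ2 y)) b c)
        = fun y => m y * (θ0 y b * θ3 y c - θ3 y b * θ0 y c
            - (θ1 y b * θ2 y c - θ2 y b * θ1 y c)) := by
      funext y
      simp [wedge2, ContinuousLinearMap.smul_apply, ContinuousLinearMap.sub_apply,
        ContinuousLinearMap.smulRight_apply, smul_eq_mul]
    rw [hfun]
    have h0b := PC.hasFDerivAt_apply D0 b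
    have h0c := PC.hasFDerivAt_apply D0 c
    have h1b := PC.hasFDerivAt_apply D1 b
    have h1c := PC.hasFDerivAt_apply D1 c
    have h2b := PC.hasFDerivAt_apply D2' b
    have h2c := PC.hasFDerivAt_apply D2' c
    have h3b := PC.hasFDerivAt_apply D3 b
    have h3c := PC.hasFDerivAt_apply D3 c
    have H := Dm.hasFDerivAt.fun_mul
      (((h0b.fun_mul h3c).fun_sub (h3b.fun_mul h0c)).fun_sub ((h1b.fun_mul h2c).fun_sub (h2b.fun_mul h1c)))
    rw [H.fderiv]
    simp only [ContinuousLinearMap.add_apply, ContinuousLinearMap.sub_apply,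
      ContinuousLinearMap.smul_apply, ContinuousLinearMap.flip_apply, smul_eq_mul]
    ring
  simp only [d2]
  rw [key u v w, key v u w, key w u v]
  have hdm' : ∀ a, fderiv ℝ m x a = m x * (3 * α x a - 2 * β x a) := by
    intro a
    rw [hdm x hx]
    simp only [ContinuousLinearMap.smul_apply, ContinuousLinearMap.sub_apply, smul_eq_mul]
  rw [hdm' u, hdm' v, hdm' w]
  have e0uv := hdθ0 x hx u v
  have e0uw := hdθ0 x hx u w
  have e0vw := hdθ0 x hx v w
  have e1uv := hdθ1 x hx u v
  have e1uw := hdθ1 x hx u w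
  have e1vw := hdθ1 x hx v w
  have e2uv := hdθ2 x hx u v
  have e2uw := hdθ2 x hx u w
  have e2vw := hdθ2 x hx v w
  have e3uv := hdθ3 x hx u v
  have e3uw := hdθ3 x hx u w
  have e3vw := hdθ3 x hx v w
  simp only [d1, wedge, ContinuousLinearMap.sub_apply, ContinuousLinearMap.add_apply,
    ContinuousLinearMap.smul_apply, smul_eq_mul] at e0uv e0uw e0vw e1uv e1uw e1vw e2uv e2uw e2vw e3uv e3uw e3vw
  linear_combination (m x * θ3 x w * e0uv - m x * θ3 x v * e0uw + m x * θ3 x u * e0vw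
    - m x * θ0 x u * e3vw + m x * θ0 x v * e3uw - m x * θ0 x w * e3uv
    - m x * θ2 x w * e1uv + m x * θ2 x v * e1uw - m x * θ2 x u * e1vw
    + m x * θ1 x u * e2vw - m x * θ1 x v * e2uw + m x * θ1 x w * e2uv)
end
end

section
/- Let a < b be real numbers, let y : ℝ → ℝ be four times continuously differentiable, and let h : ℝ → ℝ be smooth with support contained in a compact subset of the open interval (a, b). Then the function ε ↦ ∫_a^b exp(−3·(y + ε·h)″(x)) dx is differentiable at ε = 0 with derivative ∫_a^b 9·exp(−3·y″(x))·(y⁗(x) − 3·(y‴(x))²)·h(x) dx. Consequently, this derivative vanishes for every such h if and only if y⁗(x) = 3·(y‴(x))² for all x ∈ (a, b); that is, the Euler–Lagrange equation of the second-order Lagrangian ∫ exp(−3 y″) dx is, up to a nonvanishing multiple, y⁗ − 3(y‴)² = 0. -/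
open intervalIntegral

open Set MeasureTheory Filter Metric
set_option maxHeartbeats 1000000

lemma itd_combo {n : ℕ} {f g : ℝ → ℝ} (hf : ContDiff ℝ n f) (hg : ContDiff ℝ n g) (c x : ℝ) :
    iteratedDeriv n (fun t => f t + c * g t) x
      = iteratedDeriv n f x + c * iteratedDeriv n g x := by
  have h1 : (fun t => f t + c * g t) = (f + fun t => c • g t) := rfl
  rw [h1, ← iteratedDerivWithin_univ, ← iteratedDerivWithin_univ (f := f),
    ← iteratedDerivWithin_univ (f := g),
    iteratedDerivWithin_add (mem_univ x) uniqueDiffOn_univ hf.contDiffWithinAt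
      ((hg.const_smul c).contDiffWithinAt),
    show (fun y => c • g y) = c • g from rfl,
    iteratedDerivWithin_const_smul (mem_univ x) uniqueDiffOn_univ c hg.contDiffWithinAt,
    smul_eq_mul]

lemma first_variation (a b : ℝ) (hab : a < b) (y : ℝ → ℝ) (hy : ContDiff ℝ 4 y)
    (h : ℝ → ℝ) (hh : ContDiff ℝ (⊤ : ℕ∞) h)
    (K : Set ℝ) (hKc : IsCompact K) (hKI : K ⊆ Set.Ioo a b) (hsupp : Function.support h ⊆ K) :
    HasDerivAt
      (fun ε : ℝ => ∫ x in a..b, Real.exp (-3 * iteratedDeriv 2 (fun t => y t + ε * h t) x))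
      (∫ x in a..b, 9 * Real.exp (-3 * iteratedDeriv 2 y x)
          * (iteratedDeriv 4 y x - 3 * (iteratedDeriv 3 y x) ^ 2) * h x) 0 := by
  -- abbreviations
  set Y2 := iteratedDeriv 2 y with hY2def
  set Y3 := iteratedDeriv 3 y with hY3def
  set Y4 := iteratedDeriv 4 y with hY4def
  set H := iteratedDeriv 2 h with hHdef
  set u : ℝ → ℝ := fun x => Real.exp (-3 * Y2 x) with hudef
  set u1 : ℝ → ℝ := fun x => -3 * Y3 x * u x with hu1def
  set u2 : ℝ → ℝ := fun x => (9 * Y3 x ^ 2 - 3 * Y4 x) * u x with hu2def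
  -- continuity facts
  have hY2c : Continuous Y2 := hy.continuous_iteratedDeriv 2 (by norm_num)
  have hY3c : Continuous Y3 := hy.continuous_iteratedDeriv 3 (by norm_num)
  have hY4c : Continuous Y4 := hy.continuous_iteratedDeriv 4 (by norm_num)
  have hHc : Continuous H := hh.continuous_iteratedDeriv 2 (by exact_mod_cast ENat.natCast_le_of_coe_top_le_withTop le_rfl 2)
  have huc : Continuous u := (continuous_const.mul hY2c).rexp
  have hu1c : Continuous u1 := ((continuous_const.mul hY3c).mul huc)
  have hu2c : Continuous u2 :=
    ((continuous_const.mul (hY3c.pow 2)).sub (continuous_const.mul hY4c)).mul huc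
  -- h derivative facts
  have hhd : Differentiable ℝ h := hh.differentiable (by simp)
  have hh1diff : Differentiable ℝ (deriv h) := by
    have := hh.differentiable_iteratedDeriv 1 (by exact_mod_cast ENat.natCast_lt_of_coe_top_le_withTop le_rfl 1)
    simpa [iteratedDeriv_one] using this
  have hHeq : H = deriv (deriv h) := by
    rw [hHdef, iteratedDeriv_succ, iteratedDeriv_one]
  have hh1d : ∀ x, HasDerivAt (deriv h) (H x) x := fun x => by
    rw [hHeq]; exact (hh1diff x).hasDerivAt
  have hhd' : ∀ x, HasDerivAt h (deriv h x) x := fun x => (hhd x).hasDerivAt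
  -- compact support facts
  have hcs : HasCompactSupport h := HasCompactSupport.of_support_subset_isCompact hKc hsupp
  have hcsH : HasCompactSupport H := by rw [hHeq]; exact hcs.deriv.deriv
  obtain ⟨C2, hC2⟩ := hcsH.exists_bound_of_continuous hHc
  have hC2' : ∀ x, |H x| ≤ C2 := fun x => by simpa using hC2 x
  have hC2nonneg : 0 ≤ C2 := le_trans (abs_nonneg _) (hC2' 0)
  obtain ⟨C1, hC1⟩ := (isCompact_uIcc (a := a) (b := b)).exists_bound_of_continuousOn
    hY2c.continuousOn
  have hC1' : ∀ x ∈ uIcc a b, |Y2 x| ≤ C1 := fun x hx => by simpa using hC1 x hx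
  -- vanishing near the endpoints
  have hev : ∀ x : ℝ, x ∉ Set.Ioo a b → h =ᶠ[nhds x] 0 := by
    intro x hx
    have hxK : x ∉ K := fun hk => hx (hKI hk)
    filter_upwards [hKc.isClosed.isOpen_compl.mem_nhds hxK] with t ht
    exact Function.notMem_support.mp fun hs => ht (hsupp hs)
  have ha0 : h a = 0 := (hev a (by simp)).eq_of_nhds
  have hb0 : h b = 0 := (hev b (by simp)).eq_of_nhds
  have ha1 : deriv h a = 0 := by
    rw [(hev a (by simp)).deriv_eq]; exact deriv_const a 0
  have hb1 : deriv h b = 0 := by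
    rw [(hev b (by simp)).deriv_eq]; exact deriv_const b 0
  -- y-side derivative facts
  have hY2d : ∀ x, HasDerivAt Y2 (Y3 x) x := fun x => by
    have hd := (hy.differentiable_iteratedDeriv 2 (by norm_num)).differentiableAt (x := x)
    have e3 : Y3 = deriv Y2 := iteratedDeriv_succ
    rw [e3]; exact hd.hasDerivAt
  have hY3d : ∀ x, HasDerivAt Y3 (Y4 x) x := fun x => by
    have hd := (hy.differentiable_iteratedDeriv 3 (by norm_num)).differentiableAt (x := x)
    have e4 : Y4 = deriv Y3 := iteratedDeriv_succ
    rw [e4]; exact hd.hasDerivAt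
  have hud : ∀ x, HasDerivAt u (u1 x) x := fun x => by
    have := ((hY2d x).const_mul (-3)).exp
    rw [hu1def]
    convert this using 1
    simp [hudef]; ring
  have hu1d : ∀ x, HasDerivAt u1 (u2 x) x := fun x => by
    have := ((hY3d x).const_mul (-3)).mul (hud x)
    rw [hu2def]
    refine this.congr_deriv ?_
    simp only [hu1def, hudef]
    ring
  -- rewrite the function of ε
  have hfun : (fun ε : ℝ => ∫ x in a..b,
        Real.exp (-3 * iteratedDeriv 2 (fun t => y t + ε * h t) x))
      = fun ε : ℝ => ∫ x in a..b, Real.exp (-3 * (Y2 x + ε * H x)) := by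
    funext ε
    refine intervalIntegral.integral_congr fun x _ => ?_
    rw [itd_combo (hy.of_le (by norm_num)) (hh.of_le (by exact_mod_cast ENat.natCast_le_of_coe_top_le_withTop le_rfl 2)) ε x]
  rw [hfun]
  -- differentiation under the integral sign
  have hcont1 : ∀ ε : ℝ, Continuous fun x => Real.exp (-3 * (Y2 x + ε * H x)) :=
    fun ε => (continuous_const.mul (hY2c.add (continuous_const.mul hHc))).rexp
  have hF_meas : ∀ᶠ ε in nhds (0:ℝ), AEStronglyMeasurable
      (fun x => Real.exp (-3 * (Y2 x + ε * H x))) (volume.restrict (Set.uIoc a b)) :=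
    Filter.Eventually.of_forall fun ε => ((hcont1 ε).aestronglyMeasurable).restrict
  have hF_int : IntervalIntegrable (fun x => Real.exp (-3 * (Y2 x + (0:ℝ) * H x)))
      volume a b := (hcont1 0).intervalIntegrable a b
  have hF'_meas : AEStronglyMeasurable
      (fun x => -3 * H x * Real.exp (-3 * (Y2 x + (0:ℝ) * H x)))
      (volume.restrict (Set.uIoc a b)) :=
    (((continuous_const.mul hHc).mul (hcont1 0)).aestronglyMeasurable).restrict
  have h_bound : ∀ᵐ t ∂(volume : Measure ℝ), t ∈ Set.uIoc a b →
      ∀ ε ∈ Metric.ball (0:ℝ) 1,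
        ‖-3 * H t * Real.exp (-3 * (Y2 t + ε * H t))‖ ≤ 3 * C2 * Real.exp (3 * C1 + 3 * C2) := by
    refine Filter.Eventually.of_forall fun t ht ε hε => ?_
    have ht' : t ∈ uIcc a b := uIoc_subset_uIcc ht
    have hε' : |ε| ≤ 1 := le_of_lt (by simpa [Real.dist_eq] using hε)
    have h1 : -3 * (Y2 t + ε * H t) ≤ 3 * C1 + 3 * C2 := by
      have b1 : -Y2 t ≤ C1 := (neg_le_abs _).trans (hC1' t ht')
      have b2 : -(ε * H t) ≤ C2 := by
        calc -(ε * H t) ≤ |ε * H t| := neg_le_abs _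
        _ = |ε| * |H t| := abs_mul _ _
        _ ≤ 1 * C2 := mul_le_mul hε' (hC2' t) (abs_nonneg _) zero_le_one
        _ = C2 := one_mul _
      nlinarith
    have e : ‖-3 * H t * Real.exp (-3 * (Y2 t + ε * H t))‖
        = 3 * |H t| * Real.exp (-3 * (Y2 t + ε * H t)) := by
      rw [norm_mul, norm_mul]
      simp [abs_of_nonneg (Real.exp_pos _).le, abs_mul]
      try ring
    rw [e]
    apply mul_le_mul (by nlinarith [hC2' t]) (Real.exp_le_exp.mpr h1)
      (Real.exp_pos _).le (by positivity)
  have h_diff : ∀ᵐ t ∂(volume : Measure ℝ), t ∈ Set.uIoc a b →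
      ∀ ε ∈ Metric.ball (0:ℝ) 1,
        HasDerivAt (fun e : ℝ => Real.exp (-3 * (Y2 t + e * H t)))
          (-3 * H t * Real.exp (-3 * (Y2 t + ε * H t))) ε := by
    refine Filter.Eventually.of_forall fun t ht ε hε => ?_
    have hi : HasDerivAt (fun e : ℝ => -3 * (Y2 t + e * H t)) (-3 * H t) ε := by
      simpa using (((hasDerivAt_id ε).mul_const (H t)).const_add (Y2 t)).const_mul (-3)
    simpa [mul_comm] using hi.exp
  have key := intervalIntegral.hasDerivAt_integral_of_dominated_loc_of_deriv_le
    (F := fun ε x => Real.exp (-3 * (Y2 x + ε * H x)))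
    (F' := fun ε x => -3 * H x * Real.exp (-3 * (Y2 x + ε * H x)))
    (bound := fun _ => 3 * C2 * Real.exp (3 * C1 + 3 * C2))
    (Metric.ball_mem_nhds 0 one_pos) hF_meas hF_int hF'_meas h_bound intervalIntegrable_const h_diff
  -- identify the derivative
  have hD := key.2
  refine hD.congr_deriv ?_
  -- integral identity via double integration by parts
  have ibp1 : ∫ x in a..b, u x * H x = -∫ x in a..b, u1 x * deriv h x := by
    rw [intervalIntegral.integral_mul_deriv_eq_deriv_mul (fun x _ => hud x)
      (fun x _ => hh1d x) (hu1c.intervalIntegrable a b) (hHc.intervalIntegrable a b),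
      ha1, hb1]
    ring
  have ibp2 : ∫ x in a..b, u1 x * deriv h x = -∫ x in a..b, u2 x * h x := by
    rw [intervalIntegral.integral_mul_deriv_eq_deriv_mul (fun x _ => hu1d x)
      (fun x _ => hhd' x) (hu2c.intervalIntegrable a b)
      ((hh1diff.continuous).intervalIntegrable a b), ha0, hb0]
    ring
  have e1 : (∫ x in a..b, -3 * H x * Real.exp (-3 * (Y2 x + 0 * H x)))
      = -3 * ∫ x in a..b, u x * H x := by
    rw [← intervalIntegral.integral_const_mul]
    refine intervalIntegral.integral_congr fun x _ => ?_
    simp [hudef]; ring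
  have e2 : (∫ x in a..b, 9 * Real.exp (-3 * Y2 x) * (Y4 x - 3 * Y3 x ^ 2) * h x)
      = -3 * ∫ x in a..b, u2 x * h x := by
    rw [← intervalIntegral.integral_const_mul]
    refine intervalIntegral.integral_congr fun x _ => ?_
    simp only [hu2def, hudef]
    ring
  rw [e1, e2, ibp1, ibp2]
  ring


lemma fund_lemma {a b : ℝ} (hab : a < b) {g : ℝ → ℝ} (hg : Continuous g)
    (hall : ∀ h : ℝ → ℝ, ContDiff ℝ (⊤ : ℕ∞) h →
      (∃ K : Set ℝ, IsCompact K ∧ K ⊆ Set.Ioo a b ∧ Function.support h ⊆ K) →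
      (∫ x in a..b, g x * h x) = 0) :
    ∀ x ∈ Set.Ioo a b, g x = 0 := by
  intro x₀ hx₀
  by_contra hne
  obtain ⟨hax, hxb⟩ := hx₀
  obtain ⟨δ1, hδ1pos, hδ1⟩ : ∃ δ1 > 0, ∀ x, |x - x₀| < δ1 → |g x - g x₀| < |g x₀| / 2 := by
    obtain ⟨δ, hδpos, hδ⟩ := Metric.continuousAt_iff.mp (hg.continuousAt (x := x₀))
      (|g x₀| / 2) (by positivity)
    exact ⟨δ, hδpos, fun x hx => by
      have := hδ (show dist x x₀ < δ by simpa [Real.dist_eq] using hx)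
      simpa [Real.dist_eq] using this⟩
  set δ : ℝ := min (δ1 / 2) (min ((x₀ - a) / 2) ((b - x₀) / 2)) with hδdef
  have hδpos : 0 < δ := by
    apply lt_min (by positivity) (lt_min (by linarith) (by linarith))
  have hδ1' : δ < δ1 := lt_of_le_of_lt (min_le_left _ _) (by linarith)
  have hδa : a < x₀ - δ := by
    have : δ ≤ (x₀ - a) / 2 := le_trans (min_le_right _ _) (min_le_left _ _)
    linarith
  have hδb : x₀ + δ < b := by
    have : δ ≤ (b - x₀) / 2 := le_trans (min_le_right _ _) (min_le_right _ _)
    linarith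
  -- bump function
  set f : ContDiffBump x₀ := ⟨δ / 2, δ, by positivity, by linarith⟩ with hfdef
  have hsupp : Function.support (f : ℝ → ℝ) = Metric.ball x₀ δ := f.support_eq
  have hint : ∫ x in a..b, g x * f x = 0 := by
    refine hall f (f.contDiff (n := (⊤ : ℕ∞)))
      ⟨Metric.closedBall x₀ δ, isCompact_closedBall _ _, ?_, ?_⟩
    · intro x hx
      rw [Metric.mem_closedBall, Real.dist_eq] at hx
      obtain ⟨h1, h2⟩ := abs_le.mp hx
      exact ⟨by linarith, by linarith⟩
    · rw [hsupp]; exact Metric.ball_subset_closedBall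
  have hzero : ∀ x, x ∉ Metric.ball x₀ δ → g x * f x = 0 := fun x hx => by
    have : f x = 0 := by rw [← Function.notMem_support, hsupp]; exact hx
    rw [this, mul_zero]
  have hcont : Continuous fun x => g x * f x := hg.mul f.continuous
  have hi1 : IntervalIntegrable (fun x => g x * f x) volume a (x₀ - δ) :=
    hcont.intervalIntegrable _ _
  have hi2 : IntervalIntegrable (fun x => g x * f x) volume (x₀ - δ) (x₀ + δ) :=
    hcont.intervalIntegrable _ _
  have hi3 : IntervalIntegrable (fun x => g x * f x) volume (x₀ + δ) b :=
    hcont.intervalIntegrable _ _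
  have hsplit : (∫ x in a..(x₀ - δ), g x * f x) + (∫ x in (x₀ - δ)..(x₀ + δ), g x * f x)
      + (∫ x in (x₀ + δ)..b, g x * f x) = ∫ x in a..b, g x * f x := by
    rw [intervalIntegral.integral_add_adjacent_intervals hi1 hi2,
      intervalIntegral.integral_add_adjacent_intervals (hi1.trans hi2) hi3]
  have hout1 : (∫ x in a..(x₀ - δ), g x * f x) = 0 := by
    have heq : EqOn (fun x => g x * f x) (fun _ => (0:ℝ)) (uIcc a (x₀ - δ)) := by
      intro x hx
      rw [uIcc_of_le (by linarith)] at hx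
      refine hzero x ?_
      simp only [Metric.mem_ball, Real.dist_eq, not_lt]
      rw [abs_of_nonpos (by linarith [hx.2])]
      linarith [hx.2]
    rw [intervalIntegral.integral_congr heq, intervalIntegral.integral_zero]
  have hout3 : (∫ x in (x₀ + δ)..b, g x * f x) = 0 := by
    have heq : EqOn (fun x => g x * f x) (fun _ => (0:ℝ)) (uIcc (x₀ + δ) b) := by
      intro x hx
      rw [uIcc_of_le (by linarith)] at hx
      refine hzero x ?_
      simp only [Metric.mem_ball, Real.dist_eq, not_lt]
      rw [abs_of_nonneg (by linarith [hx.1])]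
      linarith [hx.1]
    rw [intervalIntegral.integral_congr heq, intervalIntegral.integral_zero]
  have hmid : (∫ x in (x₀ - δ)..(x₀ + δ), g x * f x) = 0 := by
    rw [hint] at hsplit
    linarith
  have hfx : ∀ x ∈ Set.Ioo (x₀ - δ) (x₀ + δ), 0 < f x := fun x hx => by
    apply f.pos_of_mem_ball
    show x ∈ Metric.ball x₀ δ
    rw [Real.ball_eq_Ioo]; exact hx
  have habs : ∀ x ∈ Set.Ioo (x₀ - δ) (x₀ + δ), |g x - g x₀| < |g x₀| / 2 := fun x hx => by
    apply hδ1
    rw [abs_lt]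
    constructor <;> [linarith [hx.1]; linarith [hx.2]]
  rcases lt_or_gt_of_ne hne with hneg | hpos
  · -- g x₀ < 0
    have : 0 < ∫ x in (x₀ - δ)..(x₀ + δ), -(g x * f x) := by
      refine intervalIntegral.intervalIntegral_pos_of_pos_on hi2.neg (fun x hx => ?_) (by linarith)
      have h1 := habs x hx
      rw [abs_of_neg hneg, abs_lt] at h1
      have hgneg : g x < 0 := by linarith [h1.2]
      have := hfx x hx
      nlinarith
    rw [intervalIntegral.integral_neg, hmid] at this
    simp at this
  · -- g x₀ > 0
    have : 0 < ∫ x in (x₀ - δ)..(x₀ + δ), g x * f x := by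
      refine intervalIntegral.intervalIntegral_pos_of_pos_on hi2 (fun x hx => ?_) (by linarith)
      have h1 := habs x hx
      rw [abs_of_pos hpos, abs_lt] at h1
      have hgpos : 0 < g x := by linarith [h1.1]
      exact mul_pos hgpos (hfx x hx)
    rw [hmid] at this
    simp at this

open intervalIntegral

/-- The first variation of the second-order Lagrangian `∫ exp(−3y″) dx`:
for `y` of class `C⁴` and `h` smooth with support in a compact subset of `(a,b)`,
the function `ε ↦ ∫_a^b exp(−3(y+εh)″)` is differentiable at `0` with derivative
`∫_a^b 9·exp(−3y″)·(y⁗ − 3(y‴)²)·h`; consequently the derivative vanishes for all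
such `h` iff `y⁗ = 3(y‴)²` on `(a,b)`, i.e. the Euler–Lagrange equation is (up to a
nonvanishing multiple) `y⁗ − 3(y‴)² = 0`. -/
theorem euler_lagrange_exp_neg_three_y'' (a b : ℝ) (hab : a < b)
    (y : ℝ → ℝ) (hy : ContDiff ℝ 4 y) :
    (∀ h : ℝ → ℝ, ContDiff ℝ (⊤ : ℕ∞) h →
      (∃ K : Set ℝ, IsCompact K ∧ K ⊆ Set.Ioo a b ∧ Function.support h ⊆ K) →
      HasDerivAt
        (fun ε : ℝ => ∫ x in a..b, Real.exp (-3 * iteratedDeriv 2 (fun t => y t + ε * h t) x))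
        (∫ x in a..b,
          9 * Real.exp (-3 * iteratedDeriv 2 y x)
            * (iteratedDeriv 4 y x - 3 * (iteratedDeriv 3 y x) ^ 2) * h x)
        0) ∧
    ((∀ h : ℝ → ℝ, ContDiff ℝ (⊤ : ℕ∞) h →
        (∃ K : Set ℝ, IsCompact K ∧ K ⊆ Set.Ioo a b ∧ Function.support h ⊆ K) →
        (∫ x in a..b,
          9 * Real.exp (-3 * iteratedDeriv 2 y x)
            * (iteratedDeriv 4 y x - 3 * (iteratedDeriv 3 y x) ^ 2) * h x) = 0)
      ↔ ∀ x ∈ Set.Ioo a b, iteratedDeriv 4 y x = 3 * (iteratedDeriv 3 y x) ^ 2) := by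
  constructor
  · rintro h hh ⟨K, hKc, hKI, hsupp⟩
    exact first_variation a b hab y hy h hh K hKc hKI hsupp
  · constructor
    · intro hall x hx
      set g : ℝ → ℝ := fun x => 9 * Real.exp (-3 * iteratedDeriv 2 y x)
        * (iteratedDeriv 4 y x - 3 * (iteratedDeriv 3 y x) ^ 2) with hgdef
      have hgc : Continuous g := by
        refine ((continuous_const.mul
          ((continuous_const.mul (hy.continuous_iteratedDeriv 2 (by norm_num))).rexp)).mul
          ((hy.continuous_iteratedDeriv 4 le_rfl).sub
            (continuous_const.mul ((hy.continuous_iteratedDeriv 3 (by norm_num)).pow 2))))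
      have hg0 := fund_lemma hab hgc hall x hx
      have hepos : (0:ℝ) < 9 * Real.exp (-3 * iteratedDeriv 2 y x) := by positivity
      rw [hgdef] at hg0
      simp only at hg0
      have := mul_eq_zero.mp hg0
      rcases this with h1 | h2
      · exact absurd h1 (ne_of_gt hepos)
      · linarith
    · rintro hEL h hh ⟨K, hKc, hKI, hsupp⟩
      have heq : ∀ x, 9 * Real.exp (-3 * iteratedDeriv 2 y x)
          * (iteratedDeriv 4 y x - 3 * (iteratedDeriv 3 y x) ^ 2) * h x = 0 := by
        intro x
        by_cases hx : x ∈ Set.Ioo a b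
        · rw [hEL x hx]; ring
        · have : h x = 0 := by
            by_contra hne
            exact hx (hKI (hsupp (Function.mem_support.mpr hne)))
          rw [this, mul_zero]
      simp only [heq, intervalIntegral.integral_zero]
end

section
/- Let U ⊆ ℝ⁸ be open, let σ, θ₀, θ₁, θ₂, θ₃, α, β, γ be smooth 1-forms on U that are pointwise linearly independent (a coframe), and let I₀, T₁, T₂, T₃, T₄, T₆, T₇ be smooth functions on U such that the variational Fels structure equations hold. Then the torsion components satisfy the identity T₃ = −(3/5)·T₄ at every point of U. -/
noncomputable section
open Topology Filter
set_option maxHeartbeats 2000000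

section Helpers

variable {E : Type*} [NormedAddCommGroup E] [NormedSpace ℝ E]

lemma cyc_d1 (η : E → (E →L[ℝ] ℝ)) {x : E} (hη : ContDiffAt ℝ 2 η x) (u v w : E) :
    fderiv ℝ (fun y => d1 η y u v) x w + fderiv ℝ (fun y => d1 η y v w) x u
      + fderiv ℝ (fun y => d1 η y w u) x v = 0 := by
  have hg : DifferentiableAt ℝ (fderiv ℝ η) x :=
    (hη.fderiv_right (m := 1) (by norm_num)).differentiableAt one_ne_zero
  have hga : ∀ a : E, DifferentiableAt ℝ (fun y => fderiv ℝ η y a) x :=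
    fun a => hg.clm_apply (differentiableAt_const a)
  have key2 : ∀ a b c : E, fderiv ℝ (fun y => fderiv ℝ η y a b) x c
      = fderiv ℝ (fderiv ℝ η) x c a b := by
    intro a b c
    rw [fderiv_clm_apply (hga a) (differentiableAt_const b)]
    rw [fderiv_clm_apply hg (differentiableAt_const a)]
    simp
  have key1 : ∀ a b c : E, fderiv ℝ (fun y => d1 η y a b) x c
      = fderiv ℝ (fderiv ℝ η) x c a b - fderiv ℝ (fderiv ℝ η) x c b a := by
    intro a b c
    simp only [d1]
    rw [fderiv_fun_sub ((hga a).clm_apply (differentiableAt_const b))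
      ((hga b).clm_apply (differentiableAt_const a))]
    simp [key2]
  have hs := hη.isSymmSndFDerivAt (by simp)
  have e1 : fderiv ℝ (fderiv ℝ η) x w u v = fderiv ℝ (fderiv ℝ η) x u w v := by rw [hs w u]
  have e2 : fderiv ℝ (fderiv ℝ η) x w v u = fderiv ℝ (fderiv ℝ η) x v w u := by rw [hs w v]
  have e3 : fderiv ℝ (fderiv ℝ η) x u v w = fderiv ℝ (fderiv ℝ η) x v u w := by rw [hs u v]
  rw [key1, key1, key1]
  linarith

lemma apply_hasFDerivAt {a : E → (E →L[ℝ] ℝ)} {x : E} (ha : DifferentiableAt ℝ a x) (u : E) :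
    HasFDerivAt (fun y => a y u) ((fderiv ℝ a x).flip u) x := by
  simpa using ha.hasFDerivAt.clm_apply (hasFDerivAt_const u x)

lemma wfd {a b : E → (E →L[ℝ] ℝ)} {x : E}
    (ha : DifferentiableAt ℝ a x) (hb : DifferentiableAt ℝ b x) (u v : E) :
    HasFDerivAt (fun y => a y u * b y v - a y v * b y u)
      ((a x u • (fderiv ℝ b x).flip v + b x v • (fderiv ℝ a x).flip u)
        - (a x v • (fderiv ℝ b x).flip u + b x u • (fderiv ℝ a x).flip v)) x :=
  ((apply_hasFDerivAt ha u).mul (apply_hasFDerivAt hb v)).sub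
    ((apply_hasFDerivAt ha v).mul (apply_hasFDerivAt hb u))

lemma sfd {f : E → ℝ} {a b : E → (E →L[ℝ] ℝ)} {x : E}
    (hf : DifferentiableAt ℝ f x)
    (ha : DifferentiableAt ℝ a x) (hb : DifferentiableAt ℝ b x) (u v : E) :
    HasFDerivAt (fun y => f y * (a y u * b y v - a y v * b y u))
      (f x • ((a x u • (fderiv ℝ b x).flip v + b x v • (fderiv ℝ a x).flip u)
          - (a x v • (fderiv ℝ b x).flip u + b x u • (fderiv ℝ a x).flip v))
        + (a x u * b x v - a x v * b x u) • fderiv ℝ f x) x :=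
  hf.hasFDerivAt.mul (wfd ha hb u v)

/-- Existence of a dual family for 8 linearly independent functionals on `ℝ⁸`. -/
lemma exists_dual_family (φ : Fin 8 → ((Fin 8 → ℝ) →L[ℝ] ℝ))
    (hli : LinearIndependent ℝ φ) :
    ∃ e : Fin 8 → (Fin 8 → ℝ), ∀ j i, φ j (e i) = if j = i then 1 else 0 := by
  have hinj : LinearMap.ker
      (ContinuousLinearMap.coeLM ℝ : ((Fin 8 → ℝ) →L[ℝ] ℝ) →ₗ[ℝ] (Fin 8 → ℝ) →ₗ[ℝ] ℝ) = ⊥ := by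
    rw [LinearMap.ker_eq_bot]
    exact fun f g h => ContinuousLinearMap.coe_injective h
  have hliD : LinearIndependent ℝ
      (fun j => ((φ j : (Fin 8 → ℝ) →ₗ[ℝ] ℝ) : Module.Dual ℝ (Fin 8 → ℝ))) :=
    hli.map' (ContinuousLinearMap.coeLM ℝ) hinj
  have hcard : Fintype.card (Fin 8)
      = Module.finrank ℝ (Module.Dual ℝ (Fin 8 → ℝ)) := by
    simp [Subspace.dual_finrank_eq]
  let B := basisOfLinearIndependentOfCardEqFinrank hliD hcard
  have hB : ∀ j, (B j : Module.Dual ℝ (Fin 8 → ℝ)) = (φ j : (Fin 8 → ℝ) →ₗ[ℝ] ℝ) := by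
    intro j
    rw [coe_basisOfLinearIndependentOfCardEqFinrank]
  refine ⟨fun i => (Module.evalEquiv ℝ (Fin 8 → ℝ)).symm (B.dualBasis i), fun j i => ?_⟩
  have h2 : (B j) ((Module.evalEquiv ℝ (Fin 8 → ℝ)).symm (B.dualBasis i))
      = B.dualBasis i (B j) := by
    rw [Module.apply_evalEquiv_symm_apply]
  have h3 : (φ j) ((Module.evalEquiv ℝ (Fin 8 → ℝ)).symm (B.dualBasis i))
      = (B j) ((Module.evalEquiv ℝ (Fin 8 → ℝ)).symm (B.dualBasis i)) := by
    rw [hB j]; rfl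
  rw [h3, h2, B.dualBasis_apply_self]

end Helpers

/-- For a coframe on an open set `U ⊆ ℝ⁸` satisfying the variational Fels structure
equations, the torsion components satisfy `T₃ = −(3/5)·T₄`. -/
theorem torsion_identity_T3_eq_neg_three_fifths_T4
    (U : Set (Fin 8 → ℝ)) (hU : IsOpen U)
    (σ θ0 θ1 θ2 θ3 α β γ : (Fin 8 → ℝ) → ((Fin 8 → ℝ) →L[ℝ] ℝ))
    (I0 T1 T2 T3 T4 T6 T7 : (Fin 8 → ℝ) → ℝ)
    (hσ : ContDiffOn ℝ (⊤ : ℕ∞) σ U) (hθ0 : ContDiffOn ℝ (⊤ : ℕ∞) θ0 U)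
    (hθ1 : ContDiffOn ℝ (⊤ : ℕ∞) θ1 U) (hθ2 : ContDiffOn ℝ (⊤ : ℕ∞) θ2 U)
    (hθ3 : ContDiffOn ℝ (⊤ : ℕ∞) θ3 U) (hα : ContDiffOn ℝ (⊤ : ℕ∞) α U)
    (hβ : ContDiffOn ℝ (⊤ : ℕ∞) β U) (hγ : ContDiffOn ℝ (⊤ : ℕ∞) γ U)
    (hI0 : ContDiffOn ℝ (⊤ : ℕ∞) I0 U) (hT1 : ContDiffOn ℝ (⊤ : ℕ∞) T1 U)
    (hT2 : ContDiffOn ℝ (⊤ : ℕ∞) T2 U) (hT3 : ContDiffOn ℝ (⊤ : ℕ∞) T3 U)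
    (hT4 : ContDiffOn ℝ (⊤ : ℕ∞) T4 U) (hT6 : ContDiffOn ℝ (⊤ : ℕ∞) T6 U)
    (hT7 : ContDiffOn ℝ (⊤ : ℕ∞) T7 U)
    (hcoframe : ∀ x ∈ U, LinearIndependent ℝ ![σ x, θ0 x, θ1 x, θ2 x, θ3 x, α x, β x, γ x])
    (hdσ : ∀ x ∈ U, ∀ u v, d1 σ x u v =
      wedge α σ x u v
      + wedge θ0 (fun y => T1 y • θ1 y + T2 y • θ2 y + T3 y • θ3 y) x u v
      + T4 x * wedge θ1 θ2 x u v)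
    (hdθ0 : ∀ x ∈ U, ∀ u v, d1 θ0 x u v = wedge β θ0 x u v + wedge σ θ1 x u v)
    (hdθ1 : ∀ x ∈ U, ∀ u v, d1 θ1 x u v =
      wedge (fun y => β y - α y) θ1 x u v + wedge γ θ0 x u v + wedge σ θ2 x u v)
    (hdθ2 : ∀ x ∈ U, ∀ u v, d1 θ2 x u v =
      wedge (fun y => β y - (2 : ℝ) • α y) θ2 x u v
      + (4 / 3) * wedge γ θ1 x u v + wedge σ θ3 x u v)
    (hdθ3 : ∀ x ∈ U, ∀ u v, d1 θ3 x u v =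
      wedge (fun y => β y - (3 : ℝ) • α y) θ3 x u v + wedge γ θ2 x u v
      + I0 x * wedge σ θ0 x u v + T6 x * wedge θ0 θ1 x u v + T7 x * wedge θ0 θ2 x u v) :
    ∀ x ∈ U, T3 x = -(3 / 5) * T4 x := by
  intro x hx
  have mem : U ∈ 𝓝 x := hU.mem_nhds hx
  have h1le : (1 : WithTop ℕ∞) ≤ ((⊤ : ℕ∞) : WithTop ℕ∞) := by
    exact_mod_cast ENat.natCast_le_of_coe_top_le_withTop le_rfl 1
  have h2le : (2 : WithTop ℕ∞) ≤ ((⊤ : ℕ∞) : WithTop ℕ∞) := by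
    exact_mod_cast ENat.natCast_le_of_coe_top_le_withTop le_rfl 2
  -- differentiability at x
  have dσ' : DifferentiableAt ℝ σ x := (hσ.contDiffAt mem).differentiableAt (by simp)
  have dθ0' : DifferentiableAt ℝ θ0 x := (hθ0.contDiffAt mem).differentiableAt (by simp)
  have dθ1' : DifferentiableAt ℝ θ1 x := (hθ1.contDiffAt mem).differentiableAt (by simp)
  have dθ2' : DifferentiableAt ℝ θ2 x := (hθ2.contDiffAt mem).differentiableAt (by simp)
  have dθ3' : DifferentiableAt ℝ θ3 x := (hθ3.contDiffAt mem).differentiableAt (by simp)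
  have dα' : DifferentiableAt ℝ α x := (hα.contDiffAt mem).differentiableAt (by simp)
  have dβ' : DifferentiableAt ℝ β x := (hβ.contDiffAt mem).differentiableAt (by simp)
  have dγ' : DifferentiableAt ℝ γ x := (hγ.contDiffAt mem).differentiableAt (by simp)
  have dT1' : DifferentiableAt ℝ T1 x := (hT1.contDiffAt mem).differentiableAt (by simp)
  have dT2' : DifferentiableAt ℝ T2 x := (hT2.contDiffAt mem).differentiableAt (by simp)
  have dT3' : DifferentiableAt ℝ T3 x := (hT3.contDiffAt mem).differentiableAt (by simp)
  have dT4' : DifferentiableAt ℝ T4 x := (hT4.contDiffAt mem).differentiableAt (by simp)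
  -- C² at x
  have cσ : ContDiffAt ℝ 2 σ x := (hσ.contDiffAt mem).of_le h2le
  have cθ0 : ContDiffAt ℝ 2 θ0 x := (hθ0.contDiffAt mem).of_le h2le
  have cθ1 : ContDiffAt ℝ 2 θ1 x := (hθ1.contDiffAt mem).of_le h2le
  have cθ2 : ContDiffAt ℝ 2 θ2 x := (hθ2.contDiffAt mem).of_le h2le
  -- dual family
  obtain ⟨e, hval⟩ := exists_dual_family _ (hcoframe x hx)
  have vσ : ∀ i, σ x (e i) = if (0 : Fin 8) = i then 1 else 0 := fun i => by
    simpa using hval 0 i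
  have vθ0 : ∀ i, θ0 x (e i) = if (1 : Fin 8) = i then 1 else 0 := fun i => by
    simpa using hval 1 i
  have vθ1 : ∀ i, θ1 x (e i) = if (2 : Fin 8) = i then 1 else 0 := fun i => by
    simpa using hval 2 i
  have vθ2 : ∀ i, θ2 x (e i) = if (3 : Fin 8) = i then 1 else 0 := fun i => by
    simpa using hval 3 i
  have vθ3 : ∀ i, θ3 x (e i) = if (4 : Fin 8) = i then 1 else 0 := fun i => by
    simpa using hval 4 i
  have vα : ∀ i, α x (e i) = if (5 : Fin 8) = i then 1 else 0 := fun i => by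
    simpa using hval 5 i
  have vβ : ∀ i, β x (e i) = if (6 : Fin 8) = i then 1 else 0 := fun i => by
    simpa using hval 6 i
  have vγ : ∀ i, γ x (e i) = if (7 : Fin 8) = i then 1 else 0 := fun i => by
    simpa using hval 7 i
  -- key derivative formulas
  have keyσ : ∀ u v w : (Fin 8 → ℝ), fderiv ℝ (fun y => d1 σ y u v) x w =
      (((α x u * fderiv ℝ σ x w v + σ x v * fderiv ℝ α x w u)
        - (α x v * fderiv ℝ σ x w u + σ x u * fderiv ℝ α x w v))
      + (T1 x * ((θ0 x u * fderiv ℝ θ1 x w v + θ1 x v * fderiv ℝ θ0 x w u)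
          - (θ0 x v * fderiv ℝ θ1 x w u + θ1 x u * fderiv ℝ θ0 x w v))
        + (θ0 x u * θ1 x v - θ0 x v * θ1 x u) * fderiv ℝ T1 x w)
      + (T2 x * ((θ0 x u * fderiv ℝ θ2 x w v + θ2 x v * fderiv ℝ θ0 x w u)
          - (θ0 x v * fderiv ℝ θ2 x w u + θ2 x u * fderiv ℝ θ0 x w v))
        + (θ0 x u * θ2 x v - θ0 x v * θ2 x u) * fderiv ℝ T2 x w)
      + (T3 x * ((θ0 x u * fderiv ℝ θ3 x w v + θ3 x v * fderiv ℝ θ0 x w u)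
          - (θ0 x v * fderiv ℝ θ3 x w u + θ3 x u * fderiv ℝ θ0 x w v))
        + (θ0 x u * θ3 x v - θ0 x v * θ3 x u) * fderiv ℝ T3 x w)
      + (T4 x * ((θ1 x u * fderiv ℝ θ2 x w v + θ2 x v * fderiv ℝ θ1 x w u)
          - (θ1 x v * fderiv ℝ θ2 x w u + θ2 x u * fderiv ℝ θ1 x w v))
        + (θ1 x u * θ2 x v - θ1 x v * θ2 x u) * fderiv ℝ T4 x w)) := by
    intro u v w
    have heq : (fun y => d1 σ y u v) =ᶠ[𝓝 x] (fun y =>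
        (α y u * σ y v - α y v * σ y u)
        + T1 y * (θ0 y u * θ1 y v - θ0 y v * θ1 y u)
        + T2 y * (θ0 y u * θ2 y v - θ0 y v * θ2 y u)
        + T3 y * (θ0 y u * θ3 y v - θ0 y v * θ3 y u)
        + T4 y * (θ1 y u * θ2 y v - θ1 y v * θ2 y u)) := by
      filter_upwards [mem] with y hy
      rw [hdσ y hy u v]
      simp only [wedge, ContinuousLinearMap.add_apply, ContinuousLinearMap.coe_smul',
        Pi.smul_apply, smul_eq_mul]
      ring
    rw [heq.fderiv_eq]
    have H := (((((wfd dα' dσ' u v).add (sfd dT1' dθ0' dθ1' u v)).add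
      (sfd dT2' dθ0' dθ2' u v)).add (sfd dT3' dθ0' dθ3' u v)).add
      (sfd dT4' dθ1' dθ2' u v)).fderiv
    simp only [Pi.add_def, Pi.sub_def] at H
    rw [H]
    simp only [ContinuousLinearMap.add_apply, ContinuousLinearMap.sub_apply,
      ContinuousLinearMap.smul_apply, ContinuousLinearMap.flip_apply, smul_eq_mul]
    try ring
  have keyθ0 : ∀ u v w : (Fin 8 → ℝ), fderiv ℝ (fun y => d1 θ0 y u v) x w =
      (((β x u * fderiv ℝ θ0 x w v + θ0 x v * fderiv ℝ β x w u)
        - (β x v * fderiv ℝ θ0 x w u + θ0 x u * fderiv ℝ β x w v))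
      + ((σ x u * fderiv ℝ θ1 x w v + θ1 x v * fderiv ℝ σ x w u)
        - (σ x v * fderiv ℝ θ1 x w u + θ1 x u * fderiv ℝ σ x w v))) := by
    intro u v w
    have heq : (fun y => d1 θ0 y u v) =ᶠ[𝓝 x] (fun y =>
        (β y u * θ0 y v - β y v * θ0 y u) + (σ y u * θ1 y v - σ y v * θ1 y u)) := by
      filter_upwards [mem] with y hy
      rw [hdθ0 y hy u v]
      simp only [wedge]
    rw [heq.fderiv_eq]
    have H := ((wfd dβ' dθ0' u v).add (wfd dσ' dθ1' u v)).fderiv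
    simp only [Pi.add_def, Pi.sub_def] at H
    rw [H]
    simp only [ContinuousLinearMap.add_apply, ContinuousLinearMap.sub_apply,
      ContinuousLinearMap.smul_apply, ContinuousLinearMap.flip_apply, smul_eq_mul]
    try ring
  have keyθ1 : ∀ u v w : (Fin 8 → ℝ), fderiv ℝ (fun y => d1 θ1 y u v) x w =
      ((((β x u * fderiv ℝ θ1 x w v + θ1 x v * fderiv ℝ β x w u)
        - (β x v * fderiv ℝ θ1 x w u + θ1 x u * fderiv ℝ β x w v))
      - ((α x u * fderiv ℝ θ1 x w v + θ1 x v * fderiv ℝ α x w u)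
        - (α x v * fderiv ℝ θ1 x w u + θ1 x u * fderiv ℝ α x w v)))
      + ((γ x u * fderiv ℝ θ0 x w v + θ0 x v * fderiv ℝ γ x w u)
        - (γ x v * fderiv ℝ θ0 x w u + θ0 x u * fderiv ℝ γ x w v))
      + ((σ x u * fderiv ℝ θ2 x w v + θ2 x v * fderiv ℝ σ x w u)
        - (σ x v * fderiv ℝ θ2 x w u + θ2 x u * fderiv ℝ σ x w v))) := by
    intro u v w
    have heq : (fun y => d1 θ1 y u v) =ᶠ[𝓝 x] (fun y =>
        ((β y u * θ1 y v - β y v * θ1 y u) - (α y u * θ1 y v - α y v * θ1 y u))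
        + (γ y u * θ0 y v - γ y v * θ0 y u) + (σ y u * θ2 y v - σ y v * θ2 y u)) := by
      filter_upwards [mem] with y hy
      rw [hdθ1 y hy u v]
      simp only [wedge, ContinuousLinearMap.sub_apply]
      ring
    rw [heq.fderiv_eq]
    have H := ((((wfd dβ' dθ1' u v).sub (wfd dα' dθ1' u v)).add
      (wfd dγ' dθ0' u v)).add (wfd dσ' dθ2' u v)).fderiv
    simp only [Pi.add_def, Pi.sub_def] at H
    rw [H]
    simp only [ContinuousLinearMap.add_apply, ContinuousLinearMap.sub_apply,
      ContinuousLinearMap.smul_apply, ContinuousLinearMap.flip_apply, smul_eq_mul]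
    try ring
  have keyθ2 : ∀ u v w : (Fin 8 → ℝ), fderiv ℝ (fun y => d1 θ2 y u v) x w =
      ((((β x u * fderiv ℝ θ2 x w v + θ2 x v * fderiv ℝ β x w u)
        - (β x v * fderiv ℝ θ2 x w u + θ2 x u * fderiv ℝ β x w v))
      - 2 * ((α x u * fderiv ℝ θ2 x w v + θ2 x v * fderiv ℝ α x w u)
        - (α x v * fderiv ℝ θ2 x w u + θ2 x u * fderiv ℝ α x w v)))
      + (4 / 3) * ((γ x u * fderiv ℝ θ1 x w v + θ1 x v * fderiv ℝ γ x w u)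
        - (γ x v * fderiv ℝ θ1 x w u + θ1 x u * fderiv ℝ γ x w v))
      + ((σ x u * fderiv ℝ θ3 x w v + θ3 x v * fderiv ℝ σ x w u)
        - (σ x v * fderiv ℝ θ3 x w u + θ3 x u * fderiv ℝ σ x w v))) := by
    intro u v w
    have heq : (fun y => d1 θ2 y u v) =ᶠ[𝓝 x] (fun y =>
        ((β y u * θ2 y v - β y v * θ2 y u) - 2 * (α y u * θ2 y v - α y v * θ2 y u))
        + (4 / 3) * (γ y u * θ1 y v - γ y v * θ1 y u)
        + (σ y u * θ3 y v - σ y v * θ3 y u)) := by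
      filter_upwards [mem] with y hy
      rw [hdθ2 y hy u v]
      simp only [wedge, ContinuousLinearMap.sub_apply, ContinuousLinearMap.coe_smul',
        Pi.smul_apply, smul_eq_mul]
      ring
    rw [heq.fderiv_eq]
    have H := ((((wfd dβ' dθ2' u v).sub ((wfd dα' dθ2' u v).const_mul (2 : ℝ))).add
      ((wfd dγ' dθ1' u v).const_mul ((4 : ℝ) / 3))).add (wfd dσ' dθ3' u v)).fderiv
    simp only [Pi.add_def, Pi.sub_def] at H
    rw [H]
    simp only [ContinuousLinearMap.add_apply, ContinuousLinearMap.sub_apply,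
      ContinuousLinearMap.smul_apply, ContinuousLinearMap.flip_apply, smul_eq_mul]
    try ring
  -- the four cyclic identities
  have E1 := cyc_d1 σ cσ (e 0) (e 2) (e 4)
  rw [keyσ, keyσ, keyσ] at E1
  simp [vσ, vθ0, vθ1, vθ2, vθ3, vα, vβ, vγ] at E1
  have E2 := cyc_d1 θ0 cθ0 (e 1) (e 2) (e 4)
  rw [keyθ0, keyθ0, keyθ0] at E2
  simp [vσ, vθ0, vθ1, vθ2, vθ3, vα, vβ, vγ] at E2
  have E3 := cyc_d1 θ1 cθ1 (e 1) (e 3) (e 4)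
  rw [keyθ1, keyθ1, keyθ1] at E3
  simp [vσ, vθ0, vθ1, vθ2, vθ3, vα, vβ, vγ] at E3
  have E4 := cyc_d1 θ2 cθ2 (e 2) (e 3) (e 4)
  rw [keyθ2, keyθ2, keyθ2] at E4
  simp [vσ, vθ0, vθ1, vθ2, vθ3, vα, vβ, vγ] at E4
  -- antisymmetric part relations at x
  have Rθ0_02 : fderiv ℝ θ0 x (e 0) (e 2) - fderiv ℝ θ0 x (e 2) (e 0) = 1 := by
    have h := hdθ0 x hx (e 0) (e 2)
    simp only [d1, wedge] at h
    rw [h]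
    simp [vσ, vθ0, vθ1, vβ]
  have Rθ0_04 : fderiv ℝ θ0 x (e 0) (e 4) - fderiv ℝ θ0 x (e 4) (e 0) = 0 := by
    have h := hdθ0 x hx (e 0) (e 4)
    simp only [d1, wedge] at h
    rw [h]
    simp [vσ, vθ0, vθ1, vβ]
  have Rθ2_04 : fderiv ℝ θ2 x (e 0) (e 4) - fderiv ℝ θ2 x (e 4) (e 0) = 1 := by
    have h := hdθ2 x hx (e 0) (e 4)
    simp only [d1, wedge, ContinuousLinearMap.sub_apply, ContinuousLinearMap.coe_smul',
      Pi.smul_apply, smul_eq_mul] at h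
    rw [h]
    simp [vσ, vθ0, vθ1, vθ2, vθ3, vα, vβ, vγ]
  have Rσ_14 : fderiv ℝ σ x (e 1) (e 4) - fderiv ℝ σ x (e 4) (e 1) = T3 x := by
    have h := hdσ x hx (e 1) (e 4)
    simp only [d1, wedge, ContinuousLinearMap.add_apply, ContinuousLinearMap.coe_smul',
      Pi.smul_apply, smul_eq_mul] at h
    rw [h]
    simp [vσ, vθ0, vθ1, vθ2, vθ3, vα, vβ, vγ]
  have Rσ_23 : fderiv ℝ σ x (e 2) (e 3) - fderiv ℝ σ x (e 3) (e 2) = T4 x := by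
    have h := hdσ x hx (e 2) (e 3)
    simp only [d1, wedge, ContinuousLinearMap.add_apply, ContinuousLinearMap.coe_smul',
      Pi.smul_apply, smul_eq_mul] at h
    rw [h]
    simp [vσ, vθ0, vθ1, vθ2, vθ3, vα, vβ, vγ]
  linear_combination (6/5 : ℝ) * E1 - (3/5 : ℝ) * E2 + (4/5 : ℝ) * E3 - (3/5 : ℝ) * E4
    - (6/5 : ℝ) * T3 x * Rθ0_02 + (6/5 : ℝ) * T1 x * Rθ0_04 - (6/5 : ℝ) * T4 x * Rθ2_04
    + (1/5 : ℝ) * Rσ_14 + (3/5 : ℝ) * Rσ_23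
end
end

section
/- Let U ⊆ ℝ⁸ be open, let σ, θ₀, θ₁, θ₂, θ₃, α, β, γ be smooth 1-forms on U forming a pointwise coframe and I₀, T₁, T₂, T₃, T₄, T₆, T₇ smooth functions satisfying the variational Fels structure equations, and suppose in addition there are smooth functions c₀, c₁, c₂ with dT₄ = T₄·(4α − 2β) − (5/3)·T₂·σ + c₀θ₀ + c₁θ₁ + c₂θ₂. Let v be a smooth vector field on U annihilated by σ, θ₀, θ₁ and θ₂ (i.e. σ(v) = θ₀(v) = θ₁(v) = θ₂(v) = 0 pointwise). Then there exists a smooth 1-form λ on U such that, pointwise as symmetric bilinear forms, (v⌟dσ)⊗σ + σ⊗(v⌟dσ) − (dT₄(v))·θ₁⊗θ₁ − T₄·((v⌟dθ₁)⊗θ₁ + θ₁⊗(v⌟dθ₁)) = 2·α(v)·(σ⊗σ − T₄·θ₁⊗θ₁) + θ₀⊗λ + λ⊗θ₀. (This is the statement that the quadratic form σ² − T₄θ₁² is well defined up to conformal multiple and modulo θ₀ on the quotient space N.) -/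
noncomputable section

/-- The quadratic form `σ² − T₄θ₁²` is well defined up to conformal multiple and
modulo `θ₀`: for a vector field `v` annihilated by `σ, θ₀, θ₁, θ₂`, the Lie derivative
`𝓛ᵥ(σ² − T₄θ₁²)` equals `2α(v)(σ² − T₄θ₁²)` modulo `θ₀`. -/
theorem quadratic_form_well_defined
    (U : Set (Fin 8 → ℝ)) (hU : IsOpen U)
    (σ θ0 θ1 θ2 θ3 α β γ : (Fin 8 → ℝ) → ((Fin 8 → ℝ) →L[ℝ] ℝ))
    (I0 T1 T2 T3 T4 T6 T7 : (Fin 8 → ℝ) → ℝ)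
    (hσ : ContDiffOn ℝ (⊤ : ℕ∞) σ U) (hθ0 : ContDiffOn ℝ (⊤ : ℕ∞) θ0 U)
    (hθ1 : ContDiffOn ℝ (⊤ : ℕ∞) θ1 U) (hθ2 : ContDiffOn ℝ (⊤ : ℕ∞) θ2 U)
    (hθ3 : ContDiffOn ℝ (⊤ : ℕ∞) θ3 U) (hα : ContDiffOn ℝ (⊤ : ℕ∞) α U)
    (hβ : ContDiffOn ℝ (⊤ : ℕ∞) β U) (hγ : ContDiffOn ℝ (⊤ : ℕ∞) γ U)
    (hI0 : ContDiffOn ℝ (⊤ : ℕ∞) I0 U) (hT1 : ContDiffOn ℝ (⊤ : ℕ∞) T1 U)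
    (hT2 : ContDiffOn ℝ (⊤ : ℕ∞) T2 U) (hT3 : ContDiffOn ℝ (⊤ : ℕ∞) T3 U)
    (hT4 : ContDiffOn ℝ (⊤ : ℕ∞) T4 U) (hT6 : ContDiffOn ℝ (⊤ : ℕ∞) T6 U)
    (hT7 : ContDiffOn ℝ (⊤ : ℕ∞) T7 U)
    (hcoframe : ∀ x ∈ U, LinearIndependent ℝ ![σ x, θ0 x, θ1 x, θ2 x, θ3 x, α x, β x, γ x])
    (hdσ : ∀ x ∈ U, ∀ u v, d1 σ x u v =
      wedge α σ x u v
      + wedge θ0 (fun y => T1 y • θ1 y + T2 y • θ2 y + T3 y • θ3 y) x u v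
      + T4 x * wedge θ1 θ2 x u v)
    (hdθ0 : ∀ x ∈ U, ∀ u v, d1 θ0 x u v = wedge β θ0 x u v + wedge σ θ1 x u v)
    (hdθ1 : ∀ x ∈ U, ∀ u v, d1 θ1 x u v =
      wedge (fun y => β y - α y) θ1 x u v + wedge γ θ0 x u v + wedge σ θ2 x u v)
    (hdθ2 : ∀ x ∈ U, ∀ u v, d1 θ2 x u v =
      wedge (fun y => β y - (2 : ℝ) • α y) θ2 x u v
      + (4 / 3) * wedge γ θ1 x u v + wedge σ θ3 x u v)
    (hdθ3 : ∀ x ∈ U, ∀ u v, d1 θ3 x u v =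
      wedge (fun y => β y - (3 : ℝ) • α y) θ3 x u v + wedge γ θ2 x u v
      + I0 x * wedge σ θ0 x u v + T6 x * wedge θ0 θ1 x u v + T7 x * wedge θ0 θ2 x u v)
    (c0 c1 c2 : (Fin 8 → ℝ) → ℝ)
    (hc0 : ContDiffOn ℝ (⊤ : ℕ∞) c0 U) (hc1 : ContDiffOn ℝ (⊤ : ℕ∞) c1 U)
    (hc2 : ContDiffOn ℝ (⊤ : ℕ∞) c2 U)
    (hdT4 : ∀ x ∈ U, fderiv ℝ T4 x =
      T4 x • ((4 : ℝ) • α x - (2 : ℝ) • β x) - (5 / 3 * T2 x) • σ x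
      + c0 x • θ0 x + c1 x • θ1 x + c2 x • θ2 x)
    (v : (Fin 8 → ℝ) → (Fin 8 → ℝ)) (hv : ContDiffOn ℝ (⊤ : ℕ∞) v U)
    (hvσ : ∀ x ∈ U, σ x (v x) = 0) (hvθ0 : ∀ x ∈ U, θ0 x (v x) = 0)
    (hvθ1 : ∀ x ∈ U, θ1 x (v x) = 0) (hvθ2 : ∀ x ∈ U, θ2 x (v x) = 0) :
    ∃ lam : (Fin 8 → ℝ) → ((Fin 8 → ℝ) →L[ℝ] ℝ), ContDiffOn ℝ (⊤ : ℕ∞) lam U ∧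
      ∀ x ∈ U, ∀ u w : Fin 8 → ℝ,
        d1 σ x (v x) u * σ x w + σ x u * d1 σ x (v x) w
        - fderiv ℝ T4 x (v x) * (θ1 x u * θ1 x w)
        - T4 x * (d1 θ1 x (v x) u * θ1 x w + θ1 x u * d1 θ1 x (v x) w)
        = 2 * α x (v x) * (σ x u * σ x w - T4 x * (θ1 x u * θ1 x w))
          + θ0 x u * lam x w + lam x u * θ0 x w := by

  refine ⟨fun x => (-(T3 x * θ3 x (v x))) • σ x + (-(T4 x * γ x (v x))) • θ1 x, ?_, ?_⟩
  · exact ((((hT3.mul (hθ3.clm_apply hv)).neg).smul hσ).add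
      (((hT4.mul (hγ.clm_apply hv)).neg).smul hθ1))
  · intro x hx u w
    have s0 := hvσ x hx
    have s1 := hvθ0 x hx
    have s2 := hvθ1 x hx
    have s3 := hvθ2 x hx
    have e1 : ∀ z, d1 σ x (v x) z
        = α x (v x) * σ x z - θ0 x z * (T3 x * θ3 x (v x)) := by
      intro z
      rw [hdσ x hx]
      simp [wedge, s0, s1, s2, s3]
      ring
    have e2 : ∀ z, d1 θ1 x (v x) z
        = (β x (v x) - α x (v x)) * θ1 x z + γ x (v x) * θ0 x z := by
      intro z
      rw [hdθ1 x hx]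
      simp [wedge, s0, s1, s2, s3]
    have e3 : fderiv ℝ T4 x (v x) = T4 x * (4 * α x (v x) - 2 * β x (v x)) := by
      rw [hdT4 x hx]
      simp [s0, s1, s2, s3]
    rw [e1 u, e1 w, e2 u, e2 w, e3]
    simp only [ContinuousLinearMap.add_apply, ContinuousLinearMap.smul_apply,
      smul_eq_mul, neg_mul]
    ring
end
end
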